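/- Under two-stage sampling without replacement—first drawing K balls from a population of N balls of which M are successes (so the number of successes B in the first draw is Hypergeometric(N,M,K)), then drawing L balls from those K balls (so the number of successes A among them, given B, is Hypergeometric(K,B,L))—the marginal law of A is Hypergeometric(N,M,L). -/

import Mathlib

open Finset

lemma hyp_key (N M K L a : ℕ)
    (hM : M ≤ N) (hK : K ≤ N) (hL : L ≤ K) (ha : a ≤ L) :
    ∑ b ∈ range (K + 1),
        (M.choose b * b.choose a) * ((N - M).choose (K - b) * (K - b).choose (L - a))
      = M.choose a * (N - M).choose (L - a) * (N - L).choose (K - L) := by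
  by_cases haM : M < a
  · rw [Nat.choose_eq_zero_of_lt haM]
    refine (Finset.sum_eq_zero fun b _ => ?_).trans (by ring)
    rcases le_or_gt a b with h | h
    · rw [Nat.choose_eq_zero_of_lt (lt_of_lt_of_le haM h)]; ring
    · rw [Nat.choose_eq_zero_of_lt h]; ring
  push_neg at haM
  by_cases hNM : N - M < L - a
  · rw [Nat.choose_eq_zero_of_lt hNM]
    refine (Finset.sum_eq_zero fun b _ => ?_).trans (by ring)
    rcases le_or_gt (K - b) (N - M) with h | h
    · rw [Nat.choose_eq_zero_of_lt (lt_of_le_of_lt h hNM)]; ring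
    · rw [Nat.choose_eq_zero_of_lt h]; ring
  push_neg at hNM
  have hrestr : ∑ b ∈ range (K + 1),
        (M.choose b * b.choose a) * ((N - M).choose (K - b) * (K - b).choose (L - a))
      = ∑ b ∈ Ico a (a + (K - L + 1)),
        (M.choose b * b.choose a) * ((N - M).choose (K - b) * (K - b).choose (L - a)) := by
    refine (Finset.sum_subset ?_ ?_).symm
    · intro b hb
      simp only [mem_Ico] at hb
      simp only [mem_range]
      omega
    · intro b hb hb'
      simp only [mem_range] at hb
      simp only [mem_Ico, not_and, not_lt] at hb'
      rcases lt_or_ge b a with h | h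
      · rw [Nat.choose_eq_zero_of_lt h]; ring
      · have := hb' h
        rw [Nat.choose_eq_zero_of_lt (show K - b < L - a by omega)]; ring
  rw [hrestr, Finset.sum_Ico_eq_sum_range]
  have hsimp : a + (K - L + 1) - a = K - L + 1 := by omega
  rw [hsimp]
  have hterm : ∀ j ∈ range (K - L + 1),
      (M.choose (a + j) * (a + j).choose a) *
        ((N - M).choose (K - (a + j)) * (K - (a + j)).choose (L - a))
      = (M.choose a * (N - M).choose (L - a)) *
        ((M - a).choose j * ((N - M) - (L - a)).choose (K - L - j)) := by
    intro j hj
    simp only [mem_range] at hj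
    have h1 : M.choose (a + j) * (a + j).choose a = M.choose a * (M - a).choose j := by
      rcases le_or_gt (a + j) M with h | h
      · have := Nat.choose_mul (n := M) (Nat.le_add_right a j)
        simpa using this
      · rw [Nat.choose_eq_zero_of_lt h, Nat.choose_eq_zero_of_lt (show M - a < j by omega)]
        ring
    have hc : K - (a + j) - (L - a) = K - L - j := by omega
    have hLa : L - a ≤ K - (a + j) := by omega
    have h2 : (N - M).choose (K - (a + j)) * (K - (a + j)).choose (L - a)
        = (N - M).choose (L - a) * ((N - M) - (L - a)).choose (K - L - j) := by
      rcases le_or_gt (K - (a + j)) (N - M) with h | h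
      · rw [Nat.choose_mul (n := N - M) hLa, hc]
      · rw [Nat.choose_eq_zero_of_lt h,
          Nat.choose_eq_zero_of_lt (show (N - M) - (L - a) < K - L - j by omega)]
        ring
    rw [h1, h2]; ring
  rw [Finset.sum_congr rfl hterm, ← Finset.mul_sum]
  have hvdm : ∑ j ∈ range (K - L + 1),
      (M - a).choose j * ((N - M) - (L - a)).choose (K - L - j)
      = (N - L).choose (K - L) := by
    have := Nat.add_choose_eq (M - a) ((N - M) - (L - a)) (K - L)
    rw [Finset.Nat.sum_antidiagonal_eq_sum_range_succ_mk] at this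
    rw [← this]
    congr 1
    omega
  rw [hvdm, mul_assoc]

/-- Hypergeometric composition: two-stage sampling without replacement.
First `B ~ Hyp(N,M,K)`, then `A | B ~ Hyp(K,B,L)`; marginally `A ~ Hyp(N,M,L)`,
expressed as an identity of pmfs. -/
theorem hypergeometric_composition (N M K L a : ℕ)
    (hM : M ≤ N) (hK : K ≤ N) (hL : L ≤ K) (ha : a ≤ L) :
    ∑ b ∈ Finset.range (K + 1),
        (((M.choose b : ℝ) * ((N - M).choose (K - b) : ℝ)) / (N.choose K : ℝ)) *
          (((b.choose a : ℝ) * ((K - b).choose (L - a) : ℝ)) / (K.choose L : ℝ))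
      = ((M.choose a : ℝ) * ((N - M).choose (L - a) : ℝ)) / (N.choose L : ℝ) := by
  have key := hyp_key N M K L a hM hK hL ha
  have hNK : (0:ℝ) < (N.choose K : ℝ) := by exact_mod_cast Nat.choose_pos hK
  have hKL : (0:ℝ) < (K.choose L : ℝ) := by exact_mod_cast Nat.choose_pos hL
  have hNL : (0:ℝ) < (N.choose L : ℝ) := by exact_mod_cast Nat.choose_pos (hL.trans hK)
  have hD : (0:ℝ) < ((N - L).choose (K - L) : ℝ) := by
    exact_mod_cast Nat.choose_pos (by omega : K - L ≤ N - L)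
  have hprod : (N.choose K : ℝ) * (K.choose L : ℝ)
      = (N.choose L : ℝ) * ((N - L).choose (K - L) : ℝ) := by
    exact_mod_cast Nat.choose_mul (n := N) hL
  have keyR : ∑ b ∈ Finset.range (K + 1),
      ((M.choose b : ℝ) * (b.choose a : ℝ)) *
        (((N - M).choose (K - b) : ℝ) * ((K - b).choose (L - a) : ℝ))
      = (M.choose a : ℝ) * ((N - M).choose (L - a) : ℝ) * ((N - L).choose (K - L) : ℝ) := by
    exact_mod_cast key
  have step : ∑ b ∈ Finset.range (K + 1),
        (((M.choose b : ℝ) * ((N - M).choose (K - b) : ℝ)) / (N.choose K : ℝ)) *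
          (((b.choose a : ℝ) * ((K - b).choose (L - a) : ℝ)) / (K.choose L : ℝ))
      = (∑ b ∈ Finset.range (K + 1),
          ((M.choose b : ℝ) * (b.choose a : ℝ)) *
            (((N - M).choose (K - b) : ℝ) * ((K - b).choose (L - a) : ℝ)))
        / ((N.choose K : ℝ) * (K.choose L : ℝ)) := by
    rw [Finset.sum_div]
    refine Finset.sum_congr rfl fun b _ => ?_
    field_simp
  rw [step, keyR, hprod, mul_div_mul_right _ _ hD.ne']
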